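/- Let 0 < μ_b ≤ μ_g, d > 0, r ∈ ℕ, with ℓ_b := μ_b·d a natural number, ℓ_b ≤ r, and ℓ_g := min(⌊μ_g·d⌋, r). Let the workers' speeds μ_1,…,μ_n be random variables each taking values in {μ_b, μ_g} (with any joint distribution). For any load vector ℓ with 0 ≤ ℓ_i ≤ r for all i, define ℓ′ by ℓ′_i = ℓ_b if ℓ_i ≤ ℓ_b and ℓ′_i = ℓ_g otherwise. Then for any threshold K, the success probabilities satisfy P(Σ_i ℓ′_i·1{ℓ′_i ≤ μ_i·d} ≥ K) ≥ P(Σ_i ℓ_i·1{ℓ_i ≤ μ_i·d} ≥ K). In particular, there always exists a load vector taking only the two values ℓ_b and ℓ_g whose success probability is at least that of ℓ. -/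

import Mathlib

open MeasureTheory

/-- The load a worker with capacity `c = μ·d` returns when assigned `ℓ` computations. -/
noncomputable def returnedLoad (ℓ : ℕ) (c : ℝ) : ℕ := if (ℓ : ℝ) ≤ c then ℓ else 0

lemma returnedLoad_le_returnedLoad {ℓ ℓ' : ℕ} {c : ℝ}
    (h : (ℓ : ℝ) ≤ c → ℓ ≤ ℓ' ∧ (ℓ' : ℝ) ≤ c) : returnedLoad ℓ c ≤ returnedLoad ℓ' c := by
  unfold returnedLoad
  by_cases hℓ : (ℓ : ℝ) ≤ c
  · obtain ⟨hle, hℓ'⟩ := h hℓ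
    simpa only [if_pos hℓ, if_pos hℓ'] using hle
  · simp only [if_neg hℓ, zero_le]

lemma le_goodLoad {μg d : ℝ} {r ℓ ℓg : ℕ} (hℓg : ℓg = min ⌊μg * d⌋₊ r) (hℓr : ℓ ≤ r)
    (hℓ : (ℓ : ℝ) ≤ μg * d) : ℓ ≤ ℓg ∧ (ℓg : ℝ) ≤ μg * d := by
  have hfloor : ℓ ≤ ⌊μg * d⌋₊ := Nat.le_floor hℓ
  refine ⟨hℓg ▸ le_min hfloor hℓr, ?_⟩
  calc (ℓg : ℝ) ≤ ⌊μg * d⌋₊ := by exact_mod_cast hℓg ▸ min_le_left _ _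
    _ ≤ μg * d := Nat.floor_le ((Nat.cast_nonneg ℓ).trans hℓ)

lemma badLoad_le {μb μg d s : ℝ} {ℓb : ℕ} (hμbg : μb ≤ μg) (hd : 0 < d)
    (hℓb : (ℓb : ℝ) = μb * d) (hs : s = μb ∨ s = μg) : (ℓb : ℝ) ≤ s * d := by
  rcases hs with rfl | rfl
  · exact hℓb.le
  · exact hℓb ▸ mul_le_mul_of_nonneg_right hμbg hd.le

/-- A load above `ℓ_b` can only be met in the good state, where the rounded load `ℓ_g`
is met too. -/
lemma returnedLoad_le_returnedLoad_round {μb μg d s : ℝ} {r ℓb ℓg ℓ : ℕ} (hμbg : μb ≤ μg)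
    (hd : 0 < d) (hℓb : (ℓb : ℝ) = μb * d) (hℓg : ℓg = min ⌊μg * d⌋₊ r)
    (hs : s = μb ∨ s = μg) (hℓr : ℓ ≤ r) :
    returnedLoad ℓ (s * d) ≤ returnedLoad (if ℓ ≤ ℓb then ℓb else ℓg) (s * d) := by
  refine returnedLoad_le_returnedLoad fun hℓ => ?_
  split_ifs with hb
  · exact ⟨hb, badLoad_le hμbg hd hℓb hs⟩
  · have hsg : s = μg := hs.resolve_left fun hsb => hb (by exact_mod_cast hℓb ▸ hsb ▸ hℓ)
    exact hsg ▸ le_goodLoad hℓg hℓr (hsg ▸ hℓ)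

theorem stmt_2_general {Ω : Type*} [MeasurableSpace Ω] (P : Measure Ω)
    (n : ℕ) (μb μg d : ℝ) (hμbg : μb ≤ μg) (hd : 0 < d)
    (r ℓb ℓg : ℕ) (hℓb : (ℓb : ℝ) = μb * d)
    (hℓg : ℓg = min ⌊μg * d⌋₊ r)
    (μ : Fin n → Ω → ℝ) (hμ : ∀ i ω, μ i ω = μb ∨ μ i ω = μg)
    (ℓ : Fin n → ℕ) (hℓr : ∀ i, ℓ i ≤ r)
    (ℓ' : Fin n → ℕ) (hℓ' : ∀ i, ℓ' i = if ℓ i ≤ ℓb then ℓb else ℓg)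
    (K : ℕ) :
    P {ω | K ≤ ∑ i, if (ℓ i : ℝ) ≤ μ i ω * d then ℓ i else 0} ≤
      P {ω | K ≤ ∑ i, if (ℓ' i : ℝ) ≤ μ i ω * d then ℓ' i else 0} := by
  refine measure_mono fun ω (hω : K ≤ ∑ i, returnedLoad (ℓ i) (μ i ω * d)) => ?_
  show K ≤ ∑ i, returnedLoad (ℓ' i) (μ i ω * d)
  refine hω.trans (Finset.sum_le_sum fun i _ => ?_)
  rw [hℓ' i]
  exact returnedLoad_le_returnedLoad_round hμbg hd hℓb hℓg (hμ i ω) (hℓr i)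

/-- Rounding a load vector to the two values `ℓ_b` and `ℓ_g` can only increase the
success probability: there always exists a two-valued load vector whose success
probability is at least that of any given load vector. -/
theorem stmt_2 {Ω : Type*} [MeasurableSpace Ω] (P : Measure Ω) [IsProbabilityMeasure P]
    (n : ℕ) (μb μg d : ℝ) (hμb : 0 < μb) (hμbg : μb ≤ μg) (hd : 0 < d)
    (r ℓb ℓg : ℕ) (hℓb : (ℓb : ℝ) = μb * d) (hbr : ℓb ≤ r)
    (hℓg : ℓg = min ⌊μg * d⌋₊ r)
    (μ : Fin n → Ω → ℝ) (hμ : ∀ i ω, μ i ω = μb ∨ μ i ω = μg)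
    (ℓ : Fin n → ℕ) (hℓr : ∀ i, ℓ i ≤ r)
    (ℓ' : Fin n → ℕ) (hℓ' : ∀ i, ℓ' i = if ℓ i ≤ ℓb then ℓb else ℓg)
    (K : ℕ) :
    P {ω | K ≤ ∑ i, if (ℓ i : ℝ) ≤ μ i ω * d then ℓ i else 0} ≤
      P {ω | K ≤ ∑ i, if (ℓ' i : ℝ) ≤ μ i ω * d then ℓ' i else 0} :=
  stmt_2_general P n μb μg d hμbg hd r ℓb ℓg hℓb hℓg μ hμ ℓ hℓr ℓ' hℓ' K
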